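/- If a vertex x of degree 2 in a graph G lies on a cycle of G, then eliminating x first extends to a minimum fill-in ordering of G: Φ(G) = |D_G(x)| + Φ(G_x). -/

import Mathlib

open SimpleGraph

attribute [local instance] Classical.propDecidable

variable {V : Type*} [Fintype V] [DecidableEq V]

/-- The elimination graph `G_x`: delete `x` and complete its neighborhood to a clique.
(The eliminated vertex is kept as an isolated vertex.) -/
def elimG (G : SimpleGraph V) (x : V) : SimpleGraph V where
  Adj u v := u ≠ v ∧ u ≠ x ∧ v ≠ x ∧ (G.Adj u v ∨ (G.Adj x u ∧ G.Adj x v))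
  symm := by
    constructor
    intro u v h
    obtain ⟨h1, h2, h3, h4⟩ := h
    refine ⟨h1.symm, h3, h2, ?_⟩
    rcases h4 with h | ⟨h4, h5⟩
    · exact Or.inl h.symm
    · exact Or.inr ⟨h5, h4⟩
  loopless := by constructor; intro v h; exact h.1 rfl

/-- The deficiency `D(x)`: the set of unordered pairs of distinct, non-adjacent
neighbors of `x`. -/
noncomputable def deficiencyFinset (G : SimpleGraph V) (x : V) : Finset (Sym2 V) :=
  ((Finset.univ ×ˢ Finset.univ : Finset (V × V)).filter
    (fun p => p.1 ≠ p.2 ∧ G.Adj x p.1 ∧ G.Adj x p.2 ∧ ¬ G.Adj p.1 p.2)).image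
    (fun p => s(p.1, p.2))

/-- Successive elimination of a list of vertices. -/
def elimList : SimpleGraph V → List V → SimpleGraph V
  | G, [] => G
  | G, x :: xs => elimList (elimG G x) xs

/-- The fill-in of an elimination ordering given as a list: the total number of
edges added during the elimination process. -/
noncomputable def fillList : SimpleGraph V → List V → ℕ
  | _, [] => 0
  | G, x :: xs => (deficiencyFinset G x).card + fillList (elimG G x) xs

/-- The set of fill edges added during the elimination process. -/
noncomputable def fillEdges : SimpleGraph V → List V → Finset (Sym2 V)
  | _, [] => ∅
  | G, x :: xs => deficiencyFinset G x ∪ fillEdges (elimG G x) xs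

/-- A list is an (elimination) ordering if it enumerates every vertex exactly once. -/
def IsOrdering (L : List V) : Prop := L.Nodup ∧ ∀ v : V, v ∈ L

/-- The minimum fill-in `Φ(G)`. -/
noncomputable def minFillIn (G : SimpleGraph V) : ℕ :=
  sInf {n | ∃ L : List V, IsOrdering L ∧ fillList G L = n}

/-- A vertex is simplicial if its neighborhood is a clique. -/
def IsSimplicial (G : SimpleGraph V) (x : V) : Prop :=
  ∀ a b, G.Adj x a → G.Adj x b → a ≠ b → G.Adj a b

/-- `a` and `b` are indistinguishable: equal closed neighborhoods. -/
def Indistinguishable (G : SimpleGraph V) (a b : V) : Prop :=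
  a ≠ b ∧ insert a (G.neighborSet a) = insert b (G.neighborSet b)

/-- `a` and `b` are twins: equal open neighborhoods (hence non-adjacent). -/
def Twins (G : SimpleGraph V) (a b : V) : Prop :=
  a ≠ b ∧ G.neighborSet a = G.neighborSet b

/-- Chordality: no induced cycle of length at least 4, equivalently every cycle of
length at least 4 has a chord. -/
def IsChordal (G : SimpleGraph V) : Prop :=
  ∀ n : ℕ, 4 ≤ n → ∀ f : ZMod n → V, Function.Injective f →
    ¬ (∀ i j : ZMod n, G.Adj (f i) (f j) ↔ (j = i + 1 ∨ i = j + 1))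

/-- `T` is a triangulation of `G`: a set of non-edges whose addition makes `G` chordal. -/
def IsTriangulation (G : SimpleGraph V) (T : Finset (Sym2 V)) : Prop :=
  (∀ e ∈ T, ¬ e.IsDiag ∧ e ∉ G.edgeSet) ∧
    IsChordal (G ⊔ SimpleGraph.fromEdgeSet (↑T : Set (Sym2 V)))

/-- A minimum triangulation. -/
def IsMinTriangulation (G : SimpleGraph V) (T : Finset (Sym2 V)) : Prop :=
  IsTriangulation G T ∧ ∀ T' : Finset (Sym2 V), IsTriangulation G T' → T.card ≤ T'.card

/-- The graph obtained from `G` by deleting the vertices in `S`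
(deleted vertices are kept as isolated vertices). -/
def deleteSet (G : SimpleGraph V) (S : Set V) : SimpleGraph V where
  Adj u v := G.Adj u v ∧ u ∉ S ∧ v ∉ S
  symm := ⟨fun _ _ ⟨h, hu, hv⟩ => ⟨h.symm, hv, hu⟩⟩
  loopless := ⟨fun v h => G.irrefl h.1⟩

/-! Eliminating `x` first is one of the orderings, so `Φ(G) ≤ |D(x)| + Φ(G_x)`. For the
converse, follow an arbitrary ordering of `G` up to the first of `x` and its neighbours `a`, `b`.
The cycle through `x` gives a path from `a` to `b` avoiding `x`, which survives the elimination of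
every other vertex. Eliminating a vertex `y` that is not adjacent to `x` commutes with eliminating
`x`, and since `|E(G_y)| + deg y = |E(G)| + |D(y)|` the fill of the pair does not depend on the
order. If `a` comes first, swapping the labels `x` and `a` makes `G_x` a subgraph of `G_a`; adding
edges lowers the fill-in by at most their number, so the same edge count gives
`|D(x)| + Φ(G_x) ≤ |D(a)| + Φ(G_a)`, because `deg a ≥ 2` by the path. -/

namespace SimpleGraph

open Finset

variable {G H : SimpleGraph V} {x y u v a b : V}

section Elimination

omit [Fintype V] [DecidableEq V]

lemma elimG_adj :
    (elimG G x).Adj u v ↔ u ≠ v ∧ u ≠ x ∧ v ≠ x ∧ (G.Adj u v ∨ (G.Adj x u ∧ G.Adj x v)) :=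
  Iff.rfl

lemma support_elimG_subset : (elimG G x).support ⊆ G.support \ {x} := by
  rintro u ⟨v, huv, hux, -, h | ⟨h, -⟩⟩
  · exact ⟨h.mem_support_left, hux⟩
  · exact ⟨h.mem_support_right, hux⟩

lemma elimG_eq_self (hx : G.IsIsolated x) : elimG G x = G := by
  ext u v
  refine ⟨fun ⟨_, _, _, h⟩ => h.resolve_right fun h => hx u h.1, fun h => ?_⟩
  exact ⟨h.ne, fun e => hx v (e ▸ h), fun e => hx u (e ▸ h.symm), .inl h⟩

lemma elimG_mono (h : G ≤ H) (x : V) : elimG G x ≤ elimG H x :=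
  fun _ _ ⟨huv, hux, hvx, hadj⟩ => ⟨huv, hux, hvx, hadj.imp (@h _ _) (.imp (@h _ _) (@h _ _))⟩

lemma elimG_comm (G : SimpleGraph V) (x y : V) : elimG (elimG G x) y = elimG (elimG G y) x := by
  ext u v
  simp only [elimG_adj]
  have := G.adj_comm x y
  grind

lemma elimG_adj_iff_of_not_adj (hne : x ≠ y) (hxy : ¬G.Adj x y) :
    (elimG G y).Adj x u ↔ G.Adj x u := by
  rw [elimG_adj]
  refine ⟨fun ⟨_, _, _, h⟩ => h.resolve_right fun h => hxy h.1.symm, fun h => ?_⟩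
  exact ⟨h.ne, hne, fun e => hxy (e ▸ h), .inl h⟩

lemma isIsolated_elimG_self (G : SimpleGraph V) (x : V) : (elimG G x).IsIsolated x :=
  fun _ h => h.2.1 rfl

lemma IsIsolated.elimG (hx : G.IsIsolated x) (y : V) : (elimG G y).IsIsolated x := by
  rintro u ⟨-, -, -, h | ⟨h, -⟩⟩
  · exact hx u h
  · exact hx y h.symm

lemma elimG_comap (σ : V ≃ V) (G : SimpleGraph V) (y : V) :
    elimG (G.comap σ) y = (elimG G (σ y)).comap σ := by
  ext u v
  simp only [elimG_adj, comap_adj, σ.injective.ne_iff]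

end Elimination

lemma mem_deficiencyFinset {e : Sym2 V} :
    e ∈ deficiencyFinset G x ↔
      ∃ u v, u ≠ v ∧ G.Adj x u ∧ G.Adj x v ∧ ¬G.Adj u v ∧ s(u, v) = e := by
  simp [deficiencyFinset, and_assoc]

lemma deficiencyFinset_eq_empty (hx : G.IsIsolated x) : deficiencyFinset G x = ∅ := by
  ext e
  simp only [mem_deficiencyFinset, Finset.notMem_empty, iff_false]
  rintro ⟨u, -, -, h, -⟩
  exact hx u h

lemma mk_mem_deficiencyFinset :
    s(u, v) ∈ deficiencyFinset G x ↔ u ≠ v ∧ G.Adj x u ∧ G.Adj x v ∧ ¬G.Adj u v := by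
  rw [mem_deficiencyFinset]
  constructor
  · rintro ⟨u', v', hne, hu, hv, hn, h⟩
    rcases Sym2.eq_iff.1 h with ⟨rfl, rfl⟩ | ⟨rfl, rfl⟩
    · exact ⟨hne, hu, hv, hn⟩
    · exact ⟨hne.symm, hv, hu, fun h' => hn h'.symm⟩
  · exact fun ⟨hne, hu, hv, hn⟩ => ⟨u, v, hne, hu, hv, hn, rfl⟩

lemma edgeFinset_elimG :
    (elimG G x).edgeFinset = (G.edgeFinset \ G.incidenceFinset x) ∪ deficiencyFinset G x := by
  ext e
  induction e using Sym2.ind with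
  | _ u v =>
  simp only [mem_union, mem_sdiff, mem_edgeFinset, mem_edgeSet, mem_incidenceFinset,
    mk'_mem_incidenceSet_iff, mk_mem_deficiencyFinset, elimG_adj]
  have := G.ne_of_adj (a := u) (b := v)
  have := G.ne_of_adj (a := x) (b := u)
  have := G.ne_of_adj (a := x) (b := v)
  grind

lemma card_edgeFinset_elimG_add_degree (G : SimpleGraph V) (x : V) :
    #(elimG G x).edgeFinset + G.degree x = #G.edgeFinset + #(deficiencyFinset G x) := by
  have hdisj : Disjoint (G.edgeFinset \ G.incidenceFinset x) (deficiencyFinset G x) := by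
    refine Finset.disjoint_left.2 fun e he hD => ?_
    induction e using Sym2.ind with
    | _ u v => exact (mk_mem_deficiencyFinset.1 hD).2.2.2 (mem_edgeFinset.1 (mem_sdiff.1 he).1)
  rw [edgeFinset_elimG, card_union_of_disjoint hdisj, ← card_incidenceFinset_eq_degree,
    add_right_comm, card_sdiff_add_card_eq_card (G.incidenceFinset_subset x)]

lemma fillList_cons (G : SimpleGraph V) (x : V) (M : List V) :
    fillList G (x :: M) = #(deficiencyFinset G x) + fillList (elimG G x) M :=
  rfl

lemma fillList_erase (hx : G.IsIsolated x) (M : List V) :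
    fillList G (M.erase x) = fillList G M := by
  induction M generalizing G with
  | nil => rfl
  | cons y M ih =>
    by_cases hyx : y = x
    · subst hyx
      rw [List.erase_cons_head, fillList_cons, deficiencyFinset_eq_empty hx, elimG_eq_self hx,
        card_empty, zero_add]
    · rw [List.erase_cons_tail (by simpa using hyx), fillList_cons, fillList_cons,
        ih (hx.elimG y)]

lemma fillList_bot (M : List V) : fillList ⊥ M = 0 := by
  induction M with
  | nil => rfl
  | cons y M ih =>
    rw [fillList_cons, deficiencyFinset_eq_empty IsIsolated.bot, elimG_eq_self IsIsolated.bot, ih,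
      card_empty]

omit [Fintype V] [DecidableEq V] in
lemma _root_.IsOrdering.map {L : List V} (hL : IsOrdering L) (σ : V ≃ V) : IsOrdering (L.map σ) :=
  ⟨hL.1.map σ.injective, fun v => List.mem_map.2 ⟨σ.symm v, hL.2 _, σ.apply_symm_apply v⟩⟩

lemma minFillIn_le_fillList_of_isOrdering {L : List V} (hL : IsOrdering L) :
    minFillIn G ≤ fillList G L :=
  Nat.sInf_le ⟨L, hL, rfl⟩

lemma exists_fillList_eq_minFillIn (G : SimpleGraph V) :
    ∃ L, IsOrdering L ∧ fillList G L = minFillIn G :=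
  Nat.sInf_mem (s := {n | ∃ L, IsOrdering L ∧ fillList G L = n})
    ⟨_, univ.toList, ⟨nodup_toList _, fun v => mem_toList.2 (mem_univ v)⟩, rfl⟩

lemma minFillIn_bot : minFillIn (⊥ : SimpleGraph V) = 0 := by
  obtain ⟨L, -, hL⟩ := exists_fillList_eq_minFillIn (⊥ : SimpleGraph V)
  rw [← hL, fillList_bot]

/-- The least fill-in of an elimination ordering that starts with `x`. -/
noncomputable def minFillInFrom (G : SimpleGraph V) (x : V) : ℕ :=
  #(deficiencyFinset G x) + minFillIn (elimG G x)

lemma minFillIn_le_minFillInFrom (G : SimpleGraph V) (x : V) :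
    minFillIn G ≤ minFillInFrom G x := by
  obtain ⟨M, hM, hfill⟩ := exists_fillList_eq_minFillIn (elimG G x)
  have hord : IsOrdering (x :: M.erase x) := by
    refine ⟨List.nodup_cons.2 ⟨hM.1.not_mem_erase, hM.1.erase _⟩, fun v => ?_⟩
    rcases eq_or_ne v x with rfl | hv
    · exact List.mem_cons_self
    · exact List.mem_cons_of_mem _ ((List.mem_erase_of_ne hv).2 (hM.2 v))
  calc minFillIn G ≤ fillList G (x :: M.erase x) := minFillIn_le_fillList_of_isOrdering hord
    _ = minFillInFrom G x := by
      rw [fillList_cons, fillList_erase (isIsolated_elimG_self G x), hfill, minFillInFrom]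

omit [Fintype V] [DecidableEq V] in
lemma mem_of_mem_support_elimG {M : List V} (hsupp : ∀ v ∈ G.support, v ∈ y :: M)
    (hv : v ∈ (elimG G y).support) : v ∈ M :=
  (List.mem_cons.1 (hsupp v (support_elimG_subset hv).1)).resolve_left (support_elimG_subset hv).2

lemma minFillIn_le_fillList {M : List V} (hM : M.Nodup) (hsupp : ∀ v ∈ G.support, v ∈ M) :
    minFillIn G ≤ fillList G M := by
  induction M generalizing G with
  | nil =>
    have : G = ⊥ := (support_eq_bot_iff G).1 (Set.eq_empty_of_forall_notMem fun v hv => by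
      simpa using hsupp v hv)
    rw [this, minFillIn_bot]
    exact Nat.zero_le _
  | cons y M ih =>
    calc minFillIn G ≤ minFillInFrom G y := minFillIn_le_minFillInFrom G y
      _ ≤ fillList G (y :: M) :=
        Nat.add_le_add_left (ih (List.nodup_cons.1 hM).2 fun _ => mem_of_mem_support_elimG hsupp) _

lemma fillList_add_card_edgeFinset_le (h : G ≤ H) (M : List V) :
    fillList G M + #G.edgeFinset ≤ fillList H M + #H.edgeFinset := by
  induction M generalizing G H with
  | nil => simpa [fillList] using card_le_card (edgeFinset_mono h)
  | cons y M ih =>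
    have hG := card_edgeFinset_elimG_add_degree G y
    have hH := card_edgeFinset_elimG_add_degree H y
    have hdeg : G.degree y ≤ H.degree y := degree_le_of_le h
    have := ih (elimG_mono h y)
    rw [fillList_cons, fillList_cons]
    omega

lemma minFillIn_add_card_edgeFinset_le (h : G ≤ H) :
    minFillIn G + #G.edgeFinset ≤ minFillIn H + #H.edgeFinset := by
  obtain ⟨L, hL, hfill⟩ := exists_fillList_eq_minFillIn H
  rw [← hfill]
  exact (Nat.add_le_add_right (minFillIn_le_fillList_of_isOrdering hL) _).trans
    (fillList_add_card_edgeFinset_le h L)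

lemma card_deficiencyFinset_comap (σ : V ≃ V) (G : SimpleGraph V) (y : V) :
    #(deficiencyFinset (G.comap σ) y) = #(deficiencyFinset G (σ y)) := by
  refine card_nbij' (Sym2.map σ) (Sym2.map σ.symm) ?_ ?_ ?_ ?_ <;> intro e <;>
    induction e using Sym2.ind <;> simp [mk_mem_deficiencyFinset]

lemma fillList_comap (σ : V ≃ V) (G : SimpleGraph V) (M : List V) :
    fillList (G.comap σ) M = fillList G (M.map σ) := by
  induction M generalizing G with
  | nil => rfl
  | cons y M ih =>
    rw [List.map_cons, fillList_cons, fillList_cons, card_deficiencyFinset_comap, elimG_comap, ih]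

lemma minFillIn_comap (σ : V ≃ V) (G : SimpleGraph V) : minFillIn (G.comap σ) = minFillIn G := by
  refine le_antisymm ?_ ?_
  · obtain ⟨L, hL, hfill⟩ := exists_fillList_eq_minFillIn G
    calc minFillIn (G.comap σ) ≤ fillList (G.comap σ) (L.map σ.symm) :=
          minFillIn_le_fillList_of_isOrdering (hL.map σ.symm)
      _ = minFillIn G := by simp [fillList_comap, hfill]
  · obtain ⟨L, hL, hfill⟩ := exists_fillList_eq_minFillIn (G.comap σ)
    rw [← hfill, fillList_comap]
    exact minFillIn_le_fillList_of_isOrdering (hL.map σ)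

omit [DecidableEq V] in
lemma neighborFinset_elimG_of_not_adj (hne : x ≠ y) (hxy : ¬G.Adj x y) :
    (elimG G y).neighborFinset x = G.neighborFinset x := by
  ext u
  simp [elimG_adj_iff_of_not_adj hne hxy]

omit [DecidableEq V] in
lemma degree_elimG_of_not_adj (hne : x ≠ y) (hxy : ¬G.Adj x y) :
    (elimG G y).degree x = G.degree x := by
  rw [← card_neighborFinset_eq_degree, neighborFinset_elimG_of_not_adj hne hxy,
    card_neighborFinset_eq_degree]

lemma fillList_pair_comm (hne : x ≠ y) (hxy : ¬G.Adj x y) :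
    fillList G [x, y] = fillList G [y, x] := by
  have hx := card_edgeFinset_elimG_add_degree G x
  have hy := card_edgeFinset_elimG_add_degree G y
  have hxy' := card_edgeFinset_elimG_add_degree (elimG G x) y
  have hyx' := card_edgeFinset_elimG_add_degree (elimG G y) x
  rw [degree_elimG_of_not_adj hne.symm fun h => hxy h.symm] at hxy'
  rw [degree_elimG_of_not_adj hne hxy, elimG_comm] at hyx'
  simp only [fillList]
  omega

lemma comap_swap_elimG_le (hN : G.neighborFinset x = {a, b}) :
    (elimG G x).comap (Equiv.swap x a) ≤ elimG G a := by
  have hx : ∀ u, G.Adj x u ↔ u = a ∨ u = b := by simp [← mem_neighborFinset, hN]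
  intro u v h
  simp only [comap_adj, elimG_adj, Equiv.swap_apply_def] at h ⊢
  split_ifs at h <;> grind [G.adj_comm]

lemma minFillInFrom_le_minFillInFrom_of_neighborFinset_eq_pair (hab : a ≠ b)
    (hN : G.neighborFinset x = {a, b}) (ha : 2 ≤ G.degree a) :
    minFillInFrom G x ≤ minFillInFrom G a := by
  have hle := minFillIn_add_card_edgeFinset_le (comap_swap_elimG_le hN)
  rw [minFillIn_comap, (Iso.comap _ _).card_edgeFinset_eq] at hle
  have hx := card_edgeFinset_elimG_add_degree G x
  have ha' := card_edgeFinset_elimG_add_degree G a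
  have hdeg : G.degree x = 2 := by rw [← card_neighborFinset_eq_degree, hN, card_pair hab]
  rw [minFillInFrom, minFillInFrom]
  omega

section Connectivity

omit [Fintype V] [DecidableEq V]

lemma reachable_elimG (h : G.Reachable u v) (hu : u ≠ y) (hv : v ≠ y) :
    (elimG G y).Reachable u v := by
  -- A walk through `y` is shortcut by the clique on the neighbours of `y`, so the start `w` of the
  -- new walk may be any neighbour of `y` when the old walk starts at `y`.
  suffices key : ∀ {s t} (p : G.Walk s t), t ≠ y →
      ∀ w ≠ y, w = s ∨ s = y ∧ G.Adj y w → (elimG G y).Reachable w t from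
    let ⟨p⟩ := h; key p hv u hu (.inl rfl)
  intro s t p
  induction p with
  | nil =>
    rintro ht w - (rfl | ⟨rfl, -⟩)
    exacts [Reachable.refl _, absurd rfl ht]
  | @cons s m t hsm p ih =>
    rintro ht w hw hws
    by_cases hm : m = y
    · subst hm
      rcases hws with rfl | ⟨rfl, -⟩
      exacts [ih ht w hw (.inr ⟨rfl, hsm.symm⟩), (G.irrefl hsm).elim]
    · refine Reachable.trans ?_ (ih ht m hm (.inl rfl))
      rcases eq_or_ne w m with rfl | hwm
      · rfl
      · refine Adj.reachable ⟨hwm, hw, hm, ?_⟩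
        rcases hws with rfl | ⟨rfl, hyw⟩
        exacts [.inl hsm, .inr ⟨hyw, hsm⟩]

lemma elimG_deleteSet_le (G : SimpleGraph V) (S : Set V) (y : V) :
    elimG (deleteSet G S) y ≤ deleteSet (elimG G y) S := by
  rintro u v ⟨huv, huy, hvy, ⟨h, hu, hv⟩ | ⟨⟨h₁, -, hu⟩, ⟨h₂, -, hv⟩⟩⟩
  exacts [⟨⟨huv, huy, hvy, .inl h⟩, hu, hv⟩, ⟨⟨huv, huy, hvy, .inr ⟨h₁, h₂⟩⟩, hu, hv⟩]

lemma Walk.reachable_deleteSet {S : Set V} (p : G.Walk u v) (hp : ∀ w ∈ p.support, w ∉ S) :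
    (deleteSet G S).Reachable u v := by
  induction p with
  | nil => rfl
  | cons h p ih =>
    simp only [Walk.support_cons, List.mem_cons, forall_eq_or_imp] at hp
    exact (show (deleteSet G S).Adj _ _ from ⟨h, hp.1, hp.2 _ p.start_mem_support⟩).reachable.trans
      (ih hp.2)

lemma Walk.IsCycle.exists_reachable_deleteSet {w : G.Walk x x} (hw : w.IsCycle) :
    ∃ a b, a ≠ b ∧ G.Adj x a ∧ G.Adj x b ∧ (deleteSet G {x}).Reachable a b := by
  cases w with
  | nil => exact absurd rfl hw.ne_nil
  | @cons _ a _ hxa p =>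
    rw [cons_isCycle_iff] at hw
    obtain ⟨hpath, hxa_notMem⟩ := hw
    cases hq : p.reverse with
    | nil => exact absurd rfl (G.ne_of_adj hxa)
    | @cons _ b _ hxb q =>
      have hrev := hpath.reverse
      rw [hq, Walk.cons_isPath_iff] at hrev
      refine ⟨a, b, ?_, hxa, hxb, (q.reachable_deleteSet ?_).symm⟩
      · rintro rfl
        apply hxa_notMem
        rw [← List.mem_reverse, ← Walk.edges_reverse, hq, Walk.edges_cons]
        exact List.mem_cons_self
      · rintro w hw rfl
        exact hrev.2 hw

end Connectivity

omit [DecidableEq V] in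
lemma two_le_degree_of_reachable_deleteSet (hab : a ≠ b) (hxa : G.Adj x a)
    (h : (deleteSet G {x}).Reachable a b) : 2 ≤ G.degree a := by
  obtain ⟨p⟩ := h
  cases p with
  | nil => exact absurd rfl hab
  | @cons _ c _ hac _ =>
    obtain ⟨hac, -, hcx⟩ := hac
    rw [← card_neighborFinset_eq_degree, ← card_pair (Ne.symm hcx)]
    exact card_le_card (by simp [insert_subset_iff, hxa.symm, hac])

lemma minFillInFrom_le_of_not_adj (hne : x ≠ y) (hxy : ¬G.Adj x y) :
    minFillInFrom G x ≤ #(deficiencyFinset G y) + minFillInFrom (elimG G y) x := by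
  have hswap := fillList_pair_comm hne hxy
  simp only [fillList] at hswap
  calc minFillInFrom G x
      ≤ #(deficiencyFinset G x) + minFillInFrom (elimG G x) y :=
        Nat.add_le_add_left (minFillIn_le_minFillInFrom _ y) _
    _ = #(deficiencyFinset G y) + minFillInFrom (elimG G y) x := by
        rw [minFillInFrom, minFillInFrom, elimG_comm]
        omega

theorem minFillInFrom_le_fillList {M : List V} (hab : a ≠ b) (hN : G.neighborFinset x = {a, b})
    (hreach : (deleteSet G {x}).Reachable a b) (hM : M.Nodup) (hsupp : ∀ v ∈ G.support, v ∈ M) :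
    minFillInFrom G x ≤ fillList G M := by
  induction M generalizing G with
  | nil =>
    have hxa : G.Adj x a := by simp [← mem_neighborFinset, hN]
    exact absurd (hsupp x hxa.mem_support_left) List.not_mem_nil
  | cons y M ih =>
    have hxa : G.Adj x a := by simp [← mem_neighborFinset, hN]
    have hxb : G.Adj x b := by simp [← mem_neighborFinset, hN]
    have hsuppM : ∀ v ∈ (elimG G y).support, v ∈ M := fun _ => mem_of_mem_support_elimG hsupp
    have hy : minFillInFrom G y ≤ fillList G (y :: M) :=
      Nat.add_le_add_left (minFillIn_le_fillList (List.nodup_cons.1 hM).2 hsuppM) _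
    by_cases hyx : y = x
    · exact hyx ▸ hy
    by_cases hya : y = a
    · subst hya
      exact (minFillInFrom_le_minFillInFrom_of_neighborFinset_eq_pair hab hN
        (two_le_degree_of_reachable_deleteSet hab hxa hreach)).trans hy
    by_cases hyb : y = b
    · subst hyb
      exact (minFillInFrom_le_minFillInFrom_of_neighborFinset_eq_pair hab.symm
        (hN.trans (pair_comm a y)) (two_le_degree_of_reachable_deleteSet hab.symm hxb
          hreach.symm)).trans hy
    have hxy : ¬G.Adj x y := by simp [← mem_neighborFinset, hN, hya, hyb]
    have hN' : (elimG G y).neighborFinset x = {a, b} := by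
      rw [neighborFinset_elimG_of_not_adj (Ne.symm hyx) hxy, hN]
    have hreach' : (deleteSet (elimG G y) {x}).Reachable a b :=
      (reachable_elimG hreach (Ne.symm hya) (Ne.symm hyb)).mono (elimG_deleteSet_le G _ y)
    calc minFillInFrom G x
        ≤ #(deficiencyFinset G y) + minFillInFrom (elimG G y) x :=
          minFillInFrom_le_of_not_adj (Ne.symm hyx) hxy
      _ ≤ fillList G (y :: M) := Nat.add_le_add_left
          (ih hN' hreach' (List.nodup_cons.1 hM).2 hsuppM) _

end SimpleGraph

/-- if a degree-2 vertex `x` lies on a cycle of `G`, then eliminating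
`x` first extends to a minimum fill-in ordering: `Φ(G) = |D_G(x)| + Φ(G_x)`. -/
theorem stmt_17 (G : SimpleGraph V) (x : V)
    (hdeg : G.degree x = 2)
    (hcyc : ∃ w : G.Walk x x, w.IsCycle) :
    minFillIn G = (deficiencyFinset G x).card + minFillIn (elimG G x) := by
  refine le_antisymm (minFillIn_le_minFillInFrom G x) ?_
  obtain ⟨w, hw⟩ := hcyc
  obtain ⟨a, b, hab, hxa, hxb, hreach⟩ := hw.exists_reachable_deleteSet
  have hN : G.neighborFinset x = {a, b} :=
    (Finset.eq_of_subset_of_card_le (by simp [Finset.insert_subset_iff, hxa, hxb])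
      (by rw [Finset.card_pair hab, card_neighborFinset_eq_degree, hdeg])).symm
  obtain ⟨L, hL, hfill⟩ := exists_fillList_eq_minFillIn G
  exact hfill ▸ minFillInFrom_le_fillList hab hN hreach hL.1 fun v _ => hL.2 v
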